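/- arXiv:math/9606228 — 4 statements merged into one kernel-verified Lean document; each statement's English description precedes it below -/
import Mathlib

section
/- For any two conditions ⟨a₀,w₀⟩ and ⟨a₁,w₁⟩ of Q⊚: they are incompatible in Q⊚ if and only if either there are η ∈ w₀ and l ∈ ω with η↾l ∈ a₁ ∖ a₀, or there are η ∈ w₁ and l ∈ ω with η↾l ∈ a₀ ∖ a₁. -/
/-- Restriction `η↾l` of `η ∈ 2^ω` to its first `l` entries, as a finite binary sequence. -/
def restrict (η : ℕ → Bool) (l : ℕ) : List Bool := List.ofFn (fun i : Fin l => η i)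

/-- Conditions of the forcing notion `Q⊚`: pairs `⟨a, w⟩` with `a` a finite set of
finite binary sequences and `w` a finite set of elements of Cantor space. -/
abbrev QCirc : Type := Finset (List Bool) × Finset (ℕ → Bool)

/-- The order of `Q⊚` (a stronger condition is the greater one). -/
def QCirc.le (p q : QCirc) : Prop :=
  p.1 ⊆ q.1 ∧ p.2 ⊆ q.2 ∧
    ∀ η ∈ p.2, ∀ l : ℕ, restrict η l ∈ q.1 → restrict η l ∈ p.1

/-- Compatibility in a forcing notion: a common upper bound exists. -/
def PCompat {P : Type} (le : P → P → Prop) (p q : P) : Prop :=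
  ∃ r, le p r ∧ le q r

/-! A common upper bound `r` contains `a₀ ∪ a₁`, so it forbids every branch of either condition
from passing through a node that only the other condition has. Conversely, if no branch does
so, the coordinatewise union of the two conditions is a common upper bound. -/

namespace QCirc

def Shields (p : QCirc) (s : Finset (List Bool)) : Prop :=
  ∀ η ∈ p.2, ∀ l : ℕ, restrict η l ∈ s → restrict η l ∈ p.1

theorem Shields.of_le {p r : QCirc} (h : p.le r) : p.Shields r.1 :=
  h.2.2

theorem Shields.mono {p : QCirc} {s t : Finset (List Bool)} (h : p.Shields t) (hst : s ⊆ t) :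
    p.Shields s :=
  fun η hη l hl => h η hη l (hst hl)

theorem Shields.union {p : QCirc} {s : Finset (List Bool)} (h : p.Shields s) :
    p.Shields (p.1 ∪ s) := by
  intro η hη l hl
  rcases Finset.mem_union.1 hl with hp | hs
  · exact hp
  · exact h η hη l hs

open scoped Classical in
theorem le_union_of_shields {p q : QCirc} (h : p.Shields q.1) : p.le (p.1 ∪ q.1, p.2 ∪ q.2) :=
  ⟨Finset.subset_union_left, Finset.subset_union_left, h.union⟩

theorem pcompat_iff_shields {p q : QCirc} :
    PCompat QCirc.le p q ↔ p.Shields q.1 ∧ q.Shields p.1 := by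
  classical
  constructor
  · rintro ⟨r, hpr, hqr⟩
    exact ⟨(Shields.of_le hpr).mono hqr.1, (Shields.of_le hqr).mono hpr.1⟩
  · rintro ⟨hp, hq⟩
    refine ⟨(p.1 ∪ q.1, p.2 ∪ q.2), le_union_of_shields hp, ?_⟩
    rw [Finset.union_comm p.1, Finset.union_comm p.2]
    exact le_union_of_shields hq

end QCirc

/-- Two conditions `⟨a₀,w₀⟩`, `⟨a₁,w₁⟩` of `Q⊚` are incompatible iff either some `η ∈ w₀`
and `l ∈ ω` satisfy `η↾l ∈ a₁ \ a₀`, or symmetrically with the roles of `0` and `1`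
interchanged. -/
theorem qcirc_incompatibility_characterization
    (a₀ a₁ : Finset (List Bool)) (w₀ w₁ : Finset (ℕ → Bool)) :
    ¬ PCompat QCirc.le (a₀, w₀) (a₁, w₁) ↔
      (∃ η ∈ w₀, ∃ l : ℕ, restrict η l ∈ a₁ ∧ restrict η l ∉ a₀) ∨
      (∃ η ∈ w₁, ∃ l : ℕ, restrict η l ∈ a₀ ∧ restrict η l ∉ a₁) := by
  rw [QCirc.pcompat_iff_shields, not_and_or]
  simp only [QCirc.Shields, not_forall, exists_prop]
end

section
/- Let l₀ ∈ ω and let ⟨a₀,w₀⟩, ⟨a₁,w₁⟩, ⟨a₁,w₂⟩ be conditions of Q⊚ such that every sequence in a₀ ∪ a₁ has length at most l₀ and {η↾l₀ : η ∈ w₁} = {η↾l₀ : η ∈ w₂}. Then ⟨a₀,w₀⟩ is incompatible with ⟨a₁,w₁⟩ in Q⊚ if and only if ⟨a₀,w₀⟩ is incompatible with ⟨a₁,w₂⟩ in Q⊚. -/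
/-! Two conditions `⟨a₀, w₀⟩` and `⟨a₁, w⟩` are compatible exactly when neither side adds to
the other's `a` a restriction of one of its own branches: their union `⟨a₀ ∪ a₁, w₀ ∪ w⟩` is then
a common upper bound. The clause concerning `w` only asks whether `η↾l ∈ a₀` implies `η↾l ∈ a₁`
for `η ∈ w`, and since sequences in `a₀` have length at most `l₀`, this depends on `η` only
through `η↾l₀`. -/

@[simp]
lemma length_restrict (η : ℕ → Bool) (l : ℕ) : (restrict η l).length = l := by
  simp [restrict]

lemma take_restrict (η : ℕ → Bool) {l l₀ : ℕ} (h : l ≤ l₀) :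
    (restrict η l₀).take l = restrict η l := by
  apply List.ext_getElem
  · simp only [List.length_take, length_restrict]
    omega
  · intro i _ _
    simp [restrict, List.getElem_take]

lemma restrict_eq_of_restrict_eq {η η' : ℕ → Bool} {l l₀ : ℕ} (h : l ≤ l₀)
    (heq : restrict η l₀ = restrict η' l₀) : restrict η l = restrict η' l := by
  rw [← take_restrict η h, ← take_restrict η' h, heq]

namespace QCirc

lemma pcompat_iff (a₀ a₁ : Finset (List Bool)) (w₀ w : Finset (ℕ → Bool)) :
    PCompat QCirc.le (a₀, w₀) (a₁, w) ↔
      (∀ η ∈ w₀, ∀ l, restrict η l ∈ a₁ → restrict η l ∈ a₀) ∧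
        ∀ η ∈ w, ∀ l, restrict η l ∈ a₀ → restrict η l ∈ a₁ := by
  classical
  constructor
  · rintro ⟨r, ⟨ha₀, -, hw₀⟩, ⟨ha₁, -, hw⟩⟩
    exact ⟨fun η hη l hl => hw₀ η hη l (ha₁ hl), fun η hη l hl => hw η hη l (ha₀ hl)⟩
  · rintro ⟨hw₀, hw⟩
    refine ⟨(a₀ ∪ a₁, w₀ ∪ w), ⟨Finset.subset_union_left, Finset.subset_union_left, ?_⟩,
      ⟨Finset.subset_union_right, Finset.subset_union_right, ?_⟩⟩
    · exact fun η hη l hl => (Finset.mem_union.1 hl).elim id (hw₀ η hη l)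
    · exact fun η hη l hl => (Finset.mem_union.1 hl).elim (hw η hη l) id

lemma restrict_mem_imp_of_image_subset {a₀ a₁ : Finset (List Bool)} {w w' : Set (ℕ → Bool)}
    {l₀ : ℕ} (hlen : ∀ ν ∈ a₀, ν.length ≤ l₀)
    (himg : (restrict · l₀) '' w ⊆ (restrict · l₀) '' w')
    (hw' : ∀ η ∈ w', ∀ l, restrict η l ∈ a₀ → restrict η l ∈ a₁) :
    ∀ η ∈ w, ∀ l, restrict η l ∈ a₀ → restrict η l ∈ a₁ := by
  intro η hη l hl
  obtain ⟨η', hη', heq⟩ := himg ⟨η, hη, rfl⟩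
  have hl₀ : l ≤ l₀ := length_restrict η l ▸ hlen _ hl
  rw [← restrict_eq_of_restrict_eq hl₀ heq] at hl ⊢
  exact hw' η' hη' l hl

end QCirc

/-- If all sequences in `a₀ ∪ a₁` have length at most `l₀` and `w₁`, `w₂` have the same
set of restrictions to length `l₀`, then `⟨a₀,w₀⟩ ⊥ ⟨a₁,w₁⟩` iff `⟨a₀,w₀⟩ ⊥ ⟨a₁,w₂⟩`. -/
theorem qcirc_incompat_depends_on_restrictions
    (l₀ : ℕ) (a₀ a₁ : Finset (List Bool)) (w₀ w₁ w₂ : Finset (ℕ → Bool))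
    (hlen : ∀ ν ∈ a₀ ∪ a₁, ν.length ≤ l₀)
    (hres : (fun η => restrict η l₀) '' ↑w₁ = (fun η => restrict η l₀) '' ↑w₂) :
    ¬ PCompat QCirc.le (a₀, w₀) (a₁, w₁) ↔ ¬ PCompat QCirc.le (a₀, w₀) (a₁, w₂) := by
  have hlen₀ : ∀ ν ∈ a₀, ν.length ≤ l₀ := fun ν hν => hlen ν (Finset.mem_union_left _ hν)
  rw [not_iff_not, QCirc.pcompat_iff, QCirc.pcompat_iff]
  exact and_congr_right fun _ =>
    ⟨QCirc.restrict_mem_imp_of_image_subset hlen₀ hres.ge,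
      QCirc.restrict_mem_imp_of_image_subset hlen₀ hres.le⟩
end

section
/- Let κ be an infinite cardinal and assume MA_κ(Q⊚). Let ⟨(T_i, η_i) : i < κ⟩ be a family where each T_i ⊆ 2^{<ω} is a perfect tree and each η_i ∈ 2^ω. Then there exists a set A ⊆ 2^{<ω} such that for every i < κ: (α) for all but finitely many n ∈ ω, η_i↾n ∉ A; and (β) for infinitely many n ∈ ω, A ∩ T_i ∩ 2^n ≠ ∅. -/
/-- A set `A ⊆ P` is an antichain if its elements are pairwise incompatible. -/
def PAntichain {P : Type} (le : P → P → Prop) (A : Set P) : Prop :=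
  ∀ p ∈ A, ∀ q ∈ A, p ≠ q → ¬ PCompat le p q

/-- A maximal antichain: an antichain such that every condition is compatible
with some of its members. -/
def PMaxAntichain {P : Type} (le : P → P → Prop) (A : Set P) : Prop :=
  PAntichain le A ∧ ∀ p : P, ∃ q ∈ A, PCompat le p q

/-- A filter on a forcing notion: downward closed and upward directed. -/
def PFilterOn {P : Type} (le : P → P → Prop) (G : Set P) : Prop :=
  (∀ p q : P, q ∈ G → le p q → p ∈ G) ∧
    (∀ p ∈ G, ∀ q ∈ G, ∃ r ∈ G, le p r ∧ le q r)

/-- `MA_κ(P)`: for every family of `κ` many maximal antichains of `P` and every `p ∈ P`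
there is a filter containing `p` and meeting every antichain of the family. -/
def MAax {P : Type} (le : P → P → Prop) (κ : Cardinal.{0}) : Prop :=
  ∀ (ι : Type) (A : ι → Set P), Cardinal.mk ι ≤ κ →
    (∀ i, PMaxAntichain le (A i)) →
    ∀ p : P, ∃ G : Set P, PFilterOn le G ∧ p ∈ G ∧ ∀ i, (G ∩ A i).Nonempty

/-- `T ⊆ 2^{<ω}` is a tree: it is closed under initial segments. -/
def IsTree (T : Set (List Bool)) : Prop :=
  ∀ μ ∈ T, ∀ ν : List Bool, ν <+: μ → ν ∈ T

/-- A perfect tree: a nonempty tree in which every node has two incomparable extensions. -/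
def PerfectTree (T : Set (List Bool)) : Prop :=
  IsTree T ∧ T.Nonempty ∧
    ∀ ν ∈ T, ∃ μ₁ ∈ T, ∃ μ₂ ∈ T,
      ν <+: μ₁ ∧ ν <+: μ₂ ∧ ¬ μ₁ <+: μ₂ ∧ ¬ μ₂ <+: μ₁

lemma eq_restrict_length_of_prefix {ν : List Bool} {η : ℕ → Bool} {l : ℕ}
    (h : ν <+: restrict η l) : ν = restrict η ν.length := by
  refine List.ext_getElem (by simp) fun i h₁ _ => ?_
  simpa [restrict, List.getElem_ofFn] using h.getElem h₁

lemma restrict_prefix_restrict (η : ℕ → Bool) {k l : ℕ} (h : k ≤ l) :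
    restrict η k <+: restrict η l := by
  refine List.prefix_iff_eq_take.2 (List.ext_getElem (by simp [h]) fun i _ _ => ?_)
  simp [restrict, List.getElem_ofFn]

section Forcing

variable {P : Type} {le : P → P → Prop}

lemma PCompat.symm {p q : P} (h : PCompat le p q) : PCompat le q p :=
  let ⟨r, hpr, hqr⟩ := h
  ⟨r, hqr, hpr⟩

lemma pAntichain_sUnion {c : Set (Set P)} (hc : IsChain (· ⊆ ·) c)
    (hA : ∀ A ∈ c, PAntichain le A) : PAntichain le (⋃₀ c) := by
  rintro p ⟨A, hA', hpA⟩ q ⟨B, hB', hqB⟩ hpq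
  rcases hc.total hA' hB' with h | h
  · exact hA B hB' p (h hpA) q hqB hpq
  · exact hA A hA' p hpA q (h hqB) hpq

lemma PAntichain.insert {A : Set P} (hA : PAntichain le A) {d : P}
    (hd : ∀ q ∈ A, ¬ PCompat le d q) : PAntichain le (insert d A) := by
  rintro p (rfl | hp) q (rfl | hq) hpq
  · exact absurd rfl hpq
  · exact hd q hq
  · exact fun h => hd p hp h.symm
  · exact hA p hp q hq hpq

lemma exists_pMaxAntichain_subset_of_dense (hrefl : ∀ p, le p p)
    (htrans : ∀ {p q r}, le p q → le q r → le p r)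
    {D : Set P} (hD : ∀ p, ∃ q ∈ D, le p q) :
    ∃ A ⊆ D, PMaxAntichain le A := by
  obtain ⟨M, hM⟩ := zorn_subset {A | A ⊆ D ∧ PAntichain le A} fun c hcS hc =>
    ⟨⋃₀ c, ⟨Set.sUnion_subset fun A hA => (hcS hA).1,
      pAntichain_sUnion hc fun A hA => (hcS hA).2⟩, fun _ => Set.subset_sUnion_of_mem⟩
  refine ⟨M, hM.prop.1, hM.prop.2, fun p => ?_⟩
  obtain ⟨d, hdD, hpd⟩ := hD p
  by_contra! hp
  have hd : ∀ q ∈ M, ¬ PCompat le d q := fun q hq ⟨r, hdr, hqr⟩ =>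
    hp q hq ⟨r, htrans hpd hdr, hqr⟩
  have hdM : d ∈ M := hM.mem_of_prop_insert ⟨Set.insert_subset hdD hM.prop.1,
    hM.prop.2.insert hd⟩
  exact hd d hdM ⟨d, hrefl d, hrefl d⟩

lemma MAax.exists_filter_meets_dense {κ : Cardinal.{0}} (hMA : MAax le κ)
    (hrefl : ∀ p, le p p) (htrans : ∀ {p q r}, le p q → le q r → le p r)
    {J : Type} (hJ : Cardinal.mk J ≤ κ) {D : J → Set P} (hD : ∀ j p, ∃ q ∈ D j, le p q)
    (p : P) : ∃ G : Set P, PFilterOn le G ∧ p ∈ G ∧ ∀ j, (G ∩ D j).Nonempty := by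
  choose A hAD hA using fun j => exists_pMaxAntichain_subset_of_dense hrefl htrans (hD j)
  obtain ⟨G, hG, hpG, hGA⟩ := hMA J A hJ hA p
  exact ⟨G, hG, hpG, fun j => (hGA j).mono (Set.inter_subset_inter_right G (hAD j))⟩

end Forcing

namespace QCirc

lemma le_refl (p : QCirc) : p.le p :=
  ⟨subset_rfl, subset_rfl, fun _ _ _ h => h⟩

lemma le_trans {p q r : QCirc} (hpq : p.le q) (hqr : q.le r) : p.le r :=
  ⟨hpq.1.trans hqr.1, hpq.2.1.trans hqr.2.1,
    fun η hη l hl => hpq.2.2 η hη l (hqr.2.2 η (hpq.2.1 hη) l hl)⟩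

lemma le_insert_snd [DecidableEq (ℕ → Bool)] (p : QCirc) (η : ℕ → Bool) :
    p.le (p.1, insert η p.2) :=
  ⟨subset_rfl, Finset.subset_insert _ _, fun _ _ _ h => h⟩

lemma le_insert_fst {p : QCirc} {ν : List Bool} (hν : ∀ η ∈ p.2, ν ≠ restrict η ν.length) :
    p.le (insert ν p.1, p.2) := by
  refine ⟨Finset.subset_insert _ _, subset_rfl, fun η hη l hl => ?_⟩
  rcases Finset.mem_insert.1 hl with h | h
  · obtain rfl : l = ν.length := by simpa using congrArg List.length h
    exact absurd h.symm (hν η hη)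
  · exact h

lemma restrict_mem_fst_of_pCompat {p q : QCirc} (hpq : PCompat QCirc.le p q)
    {η : ℕ → Bool} (hη : η ∈ p.2) {l : ℕ} (hl : restrict η l ∈ q.1) : restrict η l ∈ p.1 :=
  let ⟨_, hpr, hqr⟩ := hpq
  hpr.2.2 η hη l (hqr.1 hl)

end QCirc

namespace PerfectTree

variable {T : Set (List Bool)}

lemma exists_prefix_length_lt (hT : PerfectTree T) {ν : List Bool} (hν : ν ∈ T) :
    ∃ μ ∈ T, ν <+: μ ∧ ν.length < μ.length := by
  obtain ⟨μ₁, h₁, μ₂, -, p₁, p₂, i₁, -⟩ := hT.2.2 ν hν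
  refine ⟨μ₁, h₁, p₁, p₁.length_le.lt_of_ne fun h => i₁ ?_⟩
  exact p₁.eq_of_length h ▸ p₂

lemma exists_prefix_le_length (hT : PerfectTree T) {ν : List Bool} (hν : ν ∈ T) (N : ℕ) :
    ∃ μ ∈ T, ν <+: μ ∧ N ≤ μ.length := by
  induction N with
  | zero => exact ⟨ν, hν, List.prefix_refl ν, Nat.zero_le _⟩
  | succ N ih =>
    obtain ⟨μ, hμ, hνμ, hN⟩ := ih
    obtain ⟨μ', hμ', hμμ', hlt⟩ := hT.exists_prefix_length_lt hμ
    exact ⟨μ', hμ', hνμ.trans hμμ', by omega⟩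

lemma exists_prefix_ne_restrict (hT : PerfectTree T) {ν : List Bool} (hν : ν ∈ T)
    (η : ℕ → Bool) : ∃ μ ∈ T, ν <+: μ ∧ μ ≠ restrict η μ.length := by
  obtain ⟨μ₁, h₁, μ₂, h₂, p₁, p₂, i₁, i₂⟩ := hT.2.2 ν hν
  by_cases e₁ : μ₁ = restrict η μ₁.length
  · refine ⟨μ₂, h₂, p₂, fun e₂ => ?_⟩
    rcases le_total μ₁.length μ₂.length with h | h
    · exact i₁ (e₁ ▸ e₂ ▸ restrict_prefix_restrict η h)
    · exact i₂ (e₁ ▸ e₂ ▸ restrict_prefix_restrict η h)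
  · exact ⟨μ₁, h₁, p₁, e₁⟩

lemma exists_le_length_forall_ne_restrict (hT : PerfectTree T) (w : Finset (ℕ → Bool))
    (N : ℕ) : ∃ ν ∈ T, N ≤ ν.length ∧ ∀ η ∈ w, ν ≠ restrict η ν.length := by
  classical
  induction w using Finset.induction_on with
  | empty =>
    obtain ⟨ν, hν⟩ := hT.2.1
    obtain ⟨μ, hμ, -, hN⟩ := hT.exists_prefix_le_length hν N
    exact ⟨μ, hμ, hN, by simp⟩
  | insert η w _ ih =>
    obtain ⟨ν, hν, hN, hνw⟩ := ih
    obtain ⟨μ, hμ, hνμ, hμη⟩ := hT.exists_prefix_ne_restrict hν η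
    refine ⟨μ, hμ, hN.trans hνμ.length_le, Finset.forall_mem_insert _ _ _ |>.2 ⟨hμη, ?_⟩⟩
    exact fun η' hη' hμη' => hνw η' hη' (eq_restrict_length_of_prefix (hμη' ▸ hνμ))

end PerfectTree

lemma mk_sum_prod_nat_le {κ : Cardinal.{0}} (hκ : Cardinal.aleph0 ≤ κ) {ι : Type}
    (hι : Cardinal.mk ι ≤ κ) : Cardinal.mk (ι ⊕ ι × ℕ) ≤ κ := by
  have hprod : Cardinal.mk (ι × ℕ) ≤ κ := by
    rw [Cardinal.mk_prod, Cardinal.lift_id, Cardinal.lift_id, Cardinal.mk_nat]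
    calc Cardinal.mk ι * Cardinal.aleph0 ≤ κ * κ := mul_le_mul' hι hκ
      _ = κ := Cardinal.mul_eq_self hκ
  calc Cardinal.mk (ι ⊕ ι × ℕ) = Cardinal.mk ι + Cardinal.mk (ι × ℕ) :=
        (Cardinal.add_def _ _).symm
    _ ≤ κ + κ := add_le_add hι hprod
    _ = κ := Cardinal.add_eq_self hκ

/-- Under `MA_κ(Q⊚)`, for every family of `κ` many pairs `(T_i, η_i)` (a perfect tree and a
branch of Cantor space) there is `A ⊆ 2^{<ω}` such that for each `i`:
(α) `η_i↾n ∉ A` for all but finitely many `n`; and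
(β) `A ∩ T_i ∩ 2^n ≠ ∅` for infinitely many `n`. -/
theorem ma_qcirc_gives_slalom (κ : Cardinal.{0}) (hκ : Cardinal.aleph0 ≤ κ)
    (hMA : MAax QCirc.le κ)
    (ι : Type) (hι : Cardinal.mk ι ≤ κ)
    (T : ι → Set (List Bool)) (hT : ∀ i, PerfectTree (T i)) (η : ι → ℕ → Bool) :
    ∃ A : Set (List Bool), ∀ i : ι,
      (∃ N : ℕ, ∀ n ≥ N, restrict (η i) n ∉ A) ∧
      (∀ N : ℕ, ∃ n ≥ N, ∃ ν ∈ A, ν ∈ T i ∧ ν.length = n) := by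
  classical
  let D : ι ⊕ ι × ℕ → Set QCirc := Sum.elim (fun i => {p | η i ∈ p.2})
    fun x => {p | ∃ ν ∈ p.1, ν ∈ T x.1 ∧ x.2 ≤ ν.length}
  have hD : ∀ j (p : QCirc), ∃ q ∈ D j, p.le q := by
    rintro (i | ⟨i, N⟩) p
    · exact ⟨_, Finset.mem_insert_self _ _, p.le_insert_snd (η i)⟩
    · obtain ⟨ν, hνT, hN, hν⟩ := (hT i).exists_le_length_forall_ne_restrict p.2 N
      exact ⟨_, ⟨ν, Finset.mem_insert_self _ _, hνT, hN⟩, QCirc.le_insert_fst hν⟩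
  obtain ⟨G, hG, -, hGD⟩ := hMA.exists_filter_meets_dense QCirc.le_refl QCirc.le_trans
    (mk_sum_prod_nat_le hκ hι) hD (∅, ∅)
  refine ⟨⋃ p ∈ G, (p.1 : Set (List Bool)), fun i => ⟨?_, fun N => ?_⟩⟩
  · obtain ⟨p, hpG, hηp⟩ := hGD (.inl i)
    refine ⟨p.1.sup List.length + 1, fun n hn hnA => ?_⟩
    obtain ⟨q, hqG, hnq⟩ := Set.mem_iUnion₂.1 hnA
    obtain ⟨r, -, hpr, hqr⟩ := hG.2 p hpG q hqG
    have hnp := QCirc.restrict_mem_fst_of_pCompat ⟨r, hpr, hqr⟩ hηp hnq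
    have hle : n ≤ p.1.sup List.length := length_restrict (η i) n ▸ Finset.le_sup hnp
    omega
  · obtain ⟨p, hpG, ν, hνp, hνT, hN⟩ := hGD (.inr (i, N))
    exact ⟨ν.length, hN, ν, Set.mem_iUnion₂.2 ⟨p, hpG, hνp⟩, hνT, rfl⟩
end

section
/- Let P be a forcing notion with least element 0 and let ⟨A_n : n ∈ ω⟩ be maximal antichains of P satisfying: (1) A₀ = {0}; (2) every p ∈ A_{n+1} has some q ∈ A_n with q ≤ p; (3) every p ∈ A_n has infinitely many q ∈ A_{n+1} with p ≤ q. Let C be the forcing notion whose conditions are finite partial functions h with dom(h) ⊆ ⋃_n A_n and values in 2^{<ω} such that p₁ ≤ p₂ in dom(h) implies h(p₁) ⊆ h(p₂), ordered by inclusion. Then: (a) for every p ∈ ⋃_n A_n the set {h ∈ C : p ∈ dom(h)} is dense in C; and (b) for every q ∈ P, m ∈ ω and h₀ ∈ C, the set J¹_{q,m,h₀} = { h ∈ C : either h is incompatible with h₀ in C, or for every p ∈ dom(h₀) such that for some n ∈ ω, p ∈ A_n and the set {p′ ∈ A_{n+1} : p ≤ p′ and p′ compatible with q} is infinite, and for every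 ν ∈ 2^m with h₀(p) ⊆ ν, there is p′ ∈ dom(h) with p ≤ p′, p′ compatible with q, and h(p′) = ν } is dense in C. -/
/-- A set `D` is dense in a forcing notion if every condition has an upper bound in `D`. -/
def PDense {P : Type} (le : P → P → Prop) (D : Set P) : Prop :=
  ∀ p : P, ∃ q ∈ D, le p q

/-- Conditions of the forcing notion `C`: finite partial functions `h` with domain contained
in `⋃ₙ Aₙ`, values in `2^{<ω}`, which are monotone with respect to end-extension. -/
structure CCond (P : Type) [PartialOrder P] (A : ℕ → Set P) where
  /-- the finite partial function, coded with values in `Option (List Bool)` -/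
  h : P → Option (List Bool)
  dom_finite : {p : P | h p ≠ none}.Finite
  dom_subset : ∀ p : P, h p ≠ none → ∃ n : ℕ, p ∈ A n
  mono : ∀ (p₁ p₂ : P) (ν₁ ν₂ : List Bool),
    h p₁ = some ν₁ → h p₂ = some ν₂ → p₁ ≤ p₂ → ν₁ <+: ν₂

/-- The order of `C` is inclusion of partial functions. -/
def CCond.le {P : Type} [PartialOrder P] {A : ℕ → Set P} (h₁ h₂ : CCond P A) : Prop :=
  ∀ (p : P) (ν : List Bool), h₁.h p = some ν → h₂.h p = some ν
theorem exists_ge_forall_mem_of_finite {α ι : Type*} [Preorder α] {D : ι → Set α}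
    (hD : ∀ i, IsUpperSet (D i)) {a : α} {T : Set ι} (hT : T.Finite)
    (hdense : ∀ i ∈ T, ∀ b, a ≤ b → ∃ c, b ≤ c ∧ c ∈ D i) :
    ∃ b, a ≤ b ∧ ∀ i ∈ T, b ∈ D i := by
  induction T, hT using Set.Finite.induction_on with
  | empty => exact ⟨a, le_rfl, by simp⟩
  | @insert i T _ _ ih =>
    obtain ⟨b, hab, hb⟩ := ih fun j hj => hdense j (Set.mem_insert_of_mem i hj)
    obtain ⟨c, hbc, hc⟩ := hdense i (Set.mem_insert i T) b hab
    exact ⟨c, hab.trans hbc, Set.forall_mem_insert.2 ⟨hc, fun j hj => hD j hbc (hb j hj)⟩⟩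

section Levels

variable {P : Type} [Preorder P] {A : ℕ → Set P}

theorem le_of_pCompat_of_mem
    (hanti : ∀ n, PAntichain (· ≤ ·) (A n)) (hdown : ∀ n, ∀ p ∈ A (n + 1), ∃ q ∈ A n, q ≤ p)
    {n k : ℕ} (hnk : n ≤ k) {r s : P} (hr : r ∈ A n) (hs : s ∈ A k)
    (hrs : PCompat (· ≤ ·) r s) : r ≤ s := by
  induction k, hnk using Nat.le_induction generalizing s with
  | base =>
    by_contra hne
    exact hanti n r hr s hs (fun h => hne (h ▸ le_rfl)) hrs
  | succ k _ ih =>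
    obtain ⟨t, ht, hts⟩ := hdown k s hs
    obtain ⟨u, hru, hsu⟩ := hrs
    exact (ih ht ⟨u, hru, hts.trans hsu⟩).trans hts

theorem le_total_of_pCompat_of_mem
    (hanti : ∀ n, PAntichain (· ≤ ·) (A n)) (hdown : ∀ n, ∀ p ∈ A (n + 1), ∃ q ∈ A n, q ≤ p)
    {n k : ℕ} {r s : P} (hr : r ∈ A n) (hs : s ∈ A k)
    (hrs : PCompat (· ≤ ·) r s) : r ≤ s ∨ s ≤ r := by
  rcases le_total n k with hnk | hkn
  · exact Or.inl (le_of_pCompat_of_mem hanti hdown hnk hr hs hrs)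
  · obtain ⟨u, hru, hsu⟩ := hrs
    exact Or.inr (le_of_pCompat_of_mem hanti hdown hkn hs hr ⟨u, hsu, hru⟩)

end Levels

namespace CCond

variable {P : Type} [PartialOrder P] {A : ℕ → Set P}

instance : Preorder (CCond P A) where
  le := CCond.le
  le_refl _ _ _ h := h
  le_trans _ _ _ h₁₂ h₂₃ p ν h := h₂₃ p ν (h₁₂ p ν h)

theorem isUpperSet_setOf_exists_apply_eq (ν : List Bool) (Q : P → Prop) :
    IsUpperSet {g : CCond P A | ∃ p, g.h p = some ν ∧ Q p} :=
  fun _ _ hg ⟨p, hp, hQ⟩ => ⟨p, hg p ν hp, hQ⟩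

open Classical in
noncomputable def insert (g : CCond P A) (p : P) (ν : List Bool) (hp : ∃ n, p ∈ A n)
    (hbelow : ∀ r μ, g.h r = some μ → r ≤ p → μ <+: ν)
    (habove : ∀ r μ, g.h r = some μ → p ≤ r → ν <+: μ) : CCond P A where
  h := Function.update g.h p (some ν)
  dom_finite := by
    refine (g.dom_finite.insert p).subset fun r hr => ?_
    rcases eq_or_ne r p with rfl | hrp
    · exact Set.mem_insert r _
    · exact Set.mem_insert_of_mem p (by simpa [hrp] using hr)
  dom_subset r hr := by
    rcases eq_or_ne r p with rfl | hrp
    · exact hp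
    · exact g.dom_subset r (by simpa [hrp] using hr)
  mono p₁ p₂ ν₁ ν₂ h₁ h₂ hle := by
    obtain rfl | hp₁ := eq_or_ne p p₁ <;> obtain rfl | hp₂ := eq_or_ne p p₂
    · simp only [Function.update_self, Option.some.injEq] at h₁ h₂
      exact h₁ ▸ h₂ ▸ List.prefix_rfl
    · simp only [Function.update_self, Option.some.injEq, Function.update_of_ne hp₂.symm] at h₁ h₂
      exact h₁ ▸ habove p₂ ν₂ h₂ hle
    · simp only [Function.update_self, Option.some.injEq, Function.update_of_ne hp₁.symm] at h₁ h₂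
      exact h₂ ▸ hbelow p₁ ν₁ h₁ hle
    · simp only [Function.update_of_ne hp₁.symm, Function.update_of_ne hp₂.symm] at h₁ h₂
      exact g.mono p₁ p₂ ν₁ ν₂ h₁ h₂ hle

theorem exists_ge_apply_eq_some (g : CCond P A) {p : P} {ν : List Bool} (hp : ∃ n, p ∈ A n)
    (hnone : g.h p = none)
    (hbelow : ∀ r μ, g.h r = some μ → r ≤ p → μ <+: ν)
    (habove : ∀ r μ, g.h r = some μ → p ≤ r → ν <+: μ) :
    ∃ g' : CCond P A, g ≤ g' ∧ g'.h p = some ν := by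
  classical
  refine ⟨g.insert p ν hp hbelow habove, fun r μ hr => ?_, by simp [insert]⟩
  have hrp : r ≠ p := by
    rintro rfl
    simp [hnone] at hr
  simpa [insert, hrp] using hr

theorem exists_prefix_between
    (hanti : ∀ n, PAntichain (· ≤ ·) (A n)) (hdown : ∀ n, ∀ p ∈ A (n + 1), ∃ q ∈ A n, q ≤ p)
    (g : CCond P A) (p : P) :
    ∃ ν, (∀ r μ, g.h r = some μ → r ≤ p → μ <+: ν) ∧
      (∀ r μ, g.h r = some μ → p ≤ r → ν <+: μ) := by
  set S := {r | g.h r ≠ none ∧ r ≤ p}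
  rcases S.eq_empty_or_nonempty with hS | hS
  · refine ⟨[], fun r μ hr hrp => ?_, fun _ _ _ _ => List.nil_prefix⟩
    exact absurd (show r ∈ S from ⟨by simp [hr], hrp⟩) (hS ▸ Set.notMem_empty r)
  · obtain ⟨r₀, ⟨hr₀, hr₀p⟩, hmax⟩ :=
      (g.dom_finite.subset fun r hr => hr.1).exists_maximalFor id S hS
    obtain ⟨ν₀, hν₀⟩ := Option.ne_none_iff_exists'.mp hr₀
    refine ⟨ν₀, fun r μ hr hrp => g.mono r r₀ μ ν₀ hr hν₀ ?_,
      fun r μ hr hpr => g.mono r₀ r ν₀ μ hν₀ hr (hr₀p.trans hpr)⟩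
    have hrS : r ∈ S := ⟨by simp [hr], hrp⟩
    obtain ⟨k, hk⟩ := g.dom_subset r hrS.1
    obtain ⟨k₀, hk₀⟩ := g.dom_subset r₀ hr₀
    exact (le_total_of_pCompat_of_mem hanti hdown hk hk₀ ⟨p, hrp, hr₀p⟩).elim id (hmax hrS)

theorem exists_ge_apply_ne_none
    (hanti : ∀ n, PAntichain (· ≤ ·) (A n)) (hdown : ∀ n, ∀ p ∈ A (n + 1), ∃ q ∈ A n, q ≤ p)
    (g : CCond P A) {p : P} (hp : ∃ n, p ∈ A n) :
    ∃ g' : CCond P A, g ≤ g' ∧ g'.h p ≠ none := by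
  by_cases hnone : g.h p = none
  · obtain ⟨ν, hbelow, habove⟩ := g.exists_prefix_between hanti hdown p
    obtain ⟨g', hgg', hg'p⟩ := g.exists_ge_apply_eq_some hp hnone hbelow habove
    exact ⟨g', hgg', by simp [hg'p]⟩
  · exact ⟨g, le_rfl, hnone⟩

theorem finite_setOf_mem_le_mem_dom (hanti : ∀ n, PAntichain (· ≤ ·) (A n))
    (g : CCond P A) (k : ℕ) : {x ∈ A k | ∃ r, g.h r ≠ none ∧ x ≤ r}.Finite := by
  refine (g.dom_finite.biUnion (t := fun r => {x ∈ A k | x ≤ r}) fun r _ => ?_).subset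
    fun x ⟨hx, r, hr, hxr⟩ => Set.mem_biUnion hr ⟨hx, hxr⟩
  refine Set.Subsingleton.finite fun x ⟨hx, hxr⟩ y ⟨hy, hyr⟩ => ?_
  by_contra hne
  exact hanti k x hx y hy hne ⟨r, hxr, hyr⟩

theorem exists_ge_apply_eq_of_infinite
    (hanti : ∀ n, PAntichain (· ≤ ·) (A n)) (hdown : ∀ n, ∀ p ∈ A (n + 1), ∃ q ∈ A n, q ≤ p)
    (g : CCond P A) {Q : P → Prop} {n : ℕ} {p : P} {ν₀ ν : List Bool}
    (hp : p ∈ A n) (hgp : g.h p = some ν₀) (hν : ν₀ <+: ν)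
    (hinf : {p' ∈ A (n + 1) | p ≤ p' ∧ Q p'}.Infinite) :
    ∃ g' : CCond P A, g ≤ g' ∧ ∃ p', g'.h p' = some ν ∧ p ≤ p' ∧ Q p' := by
  obtain ⟨p', ⟨hp', hpp', hQ⟩, hfresh⟩ :=
    (hinf.sdiff (g.finite_setOf_mem_le_mem_dom hanti (n + 1))).nonempty
  replace hfresh : ∀ r, g.h r ≠ none → ¬ p' ≤ r := fun r hr hp'r => hfresh ⟨hp', r, hr, hp'r⟩
  have hnone : g.h p' = none := not_not.1 fun h => hfresh p' h le_rfl
  have hbelow : ∀ r μ, g.h r = some μ → r ≤ p' → μ <+: ν := by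
    intro r μ hr hrp'
    have hr' : g.h r ≠ none := by simp [hr]
    obtain ⟨k, hk⟩ := g.dom_subset r hr'
    rcases le_or_gt k n with hkn | hnk
    · have hrp : r ≤ p := le_of_pCompat_of_mem hanti hdown hkn hk hp ⟨p', hrp', hpp'⟩
      exact (g.mono r p μ ν₀ hr hgp hrp).trans hν
    · exact absurd (le_of_pCompat_of_mem hanti hdown hnk hp' hk ⟨p', le_rfl, hrp'⟩) (hfresh r hr')
  have habove : ∀ r μ, g.h r = some μ → p' ≤ r → ν <+: μ :=
    fun r μ hr hp'r => absurd hp'r (hfresh r (by simp [hr]))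
  obtain ⟨g', hgg', hg'p'⟩ := g.exists_ge_apply_eq_some ⟨n + 1, hp'⟩ hnone hbelow habove
  exact ⟨g', hgg', p', hg'p', hpp', hQ⟩

end CCond

theorem ccond_dense_sets_general (P : Type) [PartialOrder P]
    (A : ℕ → Set P) (hmax : ∀ n, PMaxAntichain (P := P) (· ≤ ·) (A n))
    (hdown : ∀ n, ∀ p ∈ A (n + 1), ∃ q ∈ A n, q ≤ p) :
    (∀ p : P, (∃ n, p ∈ A n) →
      PDense (CCond.le (P := P) (A := A)) {h : CCond P A | h.h p ≠ none}) ∧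
    (∀ (q : P) (m : ℕ) (h₀ : CCond P A),
      PDense (CCond.le (P := P) (A := A))
        {h : CCond P A |
          ¬ PCompat (CCond.le (P := P) (A := A)) h h₀ ∨
          ∀ (p : P) (ν₀ : List Bool), h₀.h p = some ν₀ →
            (∃ n : ℕ, p ∈ A n ∧
              {p' ∈ A (n + 1) | p ≤ p' ∧ PCompat (· ≤ ·) p' q}.Infinite) →
            ∀ ν : List Bool, ν.length = m → ν₀ <+: ν →
              ∃ p' : P, h.h p' = some ν ∧ p ≤ p' ∧ PCompat (· ≤ ·) p' q}) := by
  have hanti n : PAntichain (· ≤ ·) (A n) := (hmax n).1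
  refine ⟨fun p hp g => ?_, fun q m h₀ g => ?_⟩
  · obtain ⟨g', hgg', hg'p⟩ := g.exists_ge_apply_ne_none hanti hdown hp
    exact ⟨g', hg'p, hgg'⟩
  by_cases hcompat : PCompat CCond.le g h₀
  swap
  · exact ⟨g, Or.inl hcompat, le_refl g⟩
  obtain ⟨g₀, hgg₀ : g ≤ g₀, hh₀g₀ : h₀ ≤ g₀⟩ := hcompat
  let T : Set (P × List Bool) := {pν | ∃ ν₀, h₀.h pν.1 = some ν₀ ∧
    (∃ n, pν.1 ∈ A n ∧ {p' ∈ A (n + 1) | pν.1 ≤ p' ∧ PCompat (· ≤ ·) p' q}.Infinite) ∧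
    pν.2.length = m ∧ ν₀ <+: pν.2}
  have hT : T.Finite := (h₀.dom_finite.prod (List.finite_length_eq Bool m)).subset
    fun pν ⟨ν₀, hν₀, _, hlen, _⟩ => ⟨by simp [hν₀], hlen⟩
  obtain ⟨g', hg₀g', hg'⟩ := exists_ge_forall_mem_of_finite
    (fun pν => CCond.isUpperSet_setOf_exists_apply_eq pν.2
      fun p' => pν.1 ≤ p' ∧ PCompat (· ≤ ·) p' q) hT fun pν hpν b hg₀b => by
    obtain ⟨ν₀, hν₀, ⟨n, hn, hinf⟩, -, hν⟩ := hpν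
    exact b.exists_ge_apply_eq_of_infinite hanti hdown hn (hh₀g₀.trans hg₀b _ _ hν₀) hν hinf
  exact ⟨g', Or.inr fun p ν₀ hp hinf ν hlen hν => hg' (p, ν) ⟨ν₀, hp, hinf, hlen, hν⟩,
    hgg₀.trans hg₀g'⟩

/-- Let `P` be a forcing notion with least element `0` and `⟨Aₙ : n ∈ ω⟩` maximal antichains
with `A₀ = {0}`, each member of `Aₙ₊₁` extending a member of `Aₙ`, and each member of `Aₙ`
having infinitely many extensions in `Aₙ₊₁`. Then in the forcing notion `C`:
(a) for `p ∈ ⋃ₙ Aₙ`, the set `{h ∈ C : p ∈ dom h}` is dense; and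
(b) for `q ∈ P`, `m ∈ ω`, `h₀ ∈ C`, the set `J¹_{q,m,h₀}` is dense. -/
theorem ccond_dense_sets (P : Type) [PartialOrder P] (z : P) (hz : ∀ p : P, z ≤ p)
    (A : ℕ → Set P) (hmax : ∀ n, PMaxAntichain (P := P) (· ≤ ·) (A n))
    (h0 : A 0 = {z})
    (hdown : ∀ n, ∀ p ∈ A (n + 1), ∃ q ∈ A n, q ≤ p)
    (hsplit : ∀ n, ∀ p ∈ A n, {q ∈ A (n + 1) | p ≤ q}.Infinite) :
    (∀ p : P, (∃ n, p ∈ A n) →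
      PDense (CCond.le (P := P) (A := A)) {h : CCond P A | h.h p ≠ none}) ∧
    (∀ (q : P) (m : ℕ) (h₀ : CCond P A),
      PDense (CCond.le (P := P) (A := A))
        {h : CCond P A |
          ¬ PCompat (CCond.le (P := P) (A := A)) h h₀ ∨
          ∀ (p : P) (ν₀ : List Bool), h₀.h p = some ν₀ →
            (∃ n : ℕ, p ∈ A n ∧
              {p' ∈ A (n + 1) | p ≤ p' ∧ PCompat (· ≤ ·) p' q}.Infinite) →
            ∀ ν : List Bool, ν.length = m → ν₀ <+: ν →
              ∃ p' : P, h.h p' = some ν ∧ p ≤ p' ∧ PCompat (· ≤ ·) p' q}) :=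
  ccond_dense_sets_general P A hmax hdown
end
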